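/- Assume the pm×pm block Toeplitz matrix T is invertible and J ∈ ℝ^{m×m} is invertible, and let Φ̃_{p,1}, …, Φ̃_{p,p} ∈ ℝ^{m×m} satisfy the backward Yule–Walker equations. Let Φ_{p,1}, …, Φ_{p,p} ∈ ℝ^{m×m} be fixed, let L_1, …, L_p : ℝ^{m×m} → ℝ^{m×m} be linear maps, and define Φ_{p+1,r}(A) = Φ_{p,r} + L_r(A) for A ∈ ℝ^{m×m}. If for every u, v ∈ {1,…,m} the derivative matrices D_r^{(u,v)} := L_r(E_{u,v}) satisfy the orthogonality equations, then L_r(A) = A Φ̃_{p,p+1−r} for every A ∈ ℝ^{m×m} and every r = 1,…,p; that is, Whittle's forward recursion Φ_{p+1,r}(A) = Φ_{p,r} + A Φ̃_{p,p+1−r} is the unique linear transformation ensuring the local orthogonality condition. -/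

import Mathlib

/-!
Subtracting `E_{u,v}` times the backward Yule–Walker equations from the orthogonality equations
and cancelling the invertible `Jᵀ` shows that the differences
`D_r^{(u,v)} - E_{u,v} Φ̃_{p,p+1-r}`, laid side by side as a block row, are annihilated by the
block Toeplitz matrix `T`. As `T` is invertible they vanish, so `L_r` agrees with
`A ↦ A Φ̃_{p,p+1-r}` on the basis `E_{u,v}`.
-/

/-- `Φ̃_{p,1}, …, Φ̃_{p,p}` satisfy the backward Yule–Walker equations:
`∑_{r=1}^p ∑_ℓ (Φ̃_{p,p+1−r})_{(i,ℓ)} (Γ_{s−r})_{(ℓ,j)} = −(Γ_{s−p−1})_{(i,j)}`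
for all `s = 1,…,p` and `i,j = 1,…,m`. -/
def BackwardYW (m p : ℕ) (Γ : ℤ → Matrix (Fin m) (Fin m) ℝ)
    (Φt : ℕ → Matrix (Fin m) (Fin m) ℝ) : Prop :=
  ∀ s ∈ Finset.Icc 1 p, ∀ i j : Fin m,
    ∑ r ∈ Finset.Icc 1 p, ∑ ℓ : Fin m,
      Φt (p + 1 - r) i ℓ * Γ ((s : ℤ) - (r : ℤ)) ℓ j
    = -Γ ((s : ℤ) - (p : ℤ) - 1) i j

/-- The family `(D_r^{(u,v)})` satisfies the orthogonality equations:
`∑_{r=1}^p ∑_k ∑_ℓ J_{(k,i)} (Γ_{s−r})_{(ℓ,j)} (D_r^{(u,v)})_{(k,ℓ)}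
  = −J_{(u,i)} (Γ_{s−p−1})_{(v,j)}`
for all `s = 1,…,p` and `i,j,u,v = 1,…,m`. -/
def OrthogonalityEqs (m p : ℕ) (Γ : ℤ → Matrix (Fin m) (Fin m) ℝ)
    (J : Matrix (Fin m) (Fin m) ℝ)
    (D : ℕ → Fin m → Fin m → Matrix (Fin m) (Fin m) ℝ) : Prop :=
  ∀ s ∈ Finset.Icc 1 p, ∀ i j u v : Fin m,
    ∑ r ∈ Finset.Icc 1 p, ∑ k : Fin m, ∑ ℓ : Fin m,
      J k i * Γ ((s : ℤ) - (r : ℤ)) ℓ j * D r u v k ℓ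
    = -(J u i * Γ ((s : ℤ) - (p : ℤ) - 1) v j)

open Finset Matrix

theorem Finset.sum_Icc_one_eq_sum_fin {α : Type*} [AddCommMonoid α] (p : ℕ) (g : ℕ → α) :
    ∑ r ∈ Icc 1 p, g r = ∑ a : Fin p, g (a + 1) := by
  rw [← Ico_add_one_right_eq_Icc, sum_Ico_eq_sum_range,
    Fin.sum_univ_eq_sum_range (fun i => g (i + 1))]
  simp [add_comm]

section BlockToeplitz

variable {l n R : Type*} [Fintype n] [CommRing R]

def blockToeplitz (p : ℕ) (Γ : ℤ → Matrix n n R) : Matrix (Fin p × n) (Fin p × n) R :=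
  of fun a b => Γ ((b.1 : ℤ) - (a.1 : ℤ)) a.2 b.2

def blockRow (p : ℕ) (X : ℕ → Matrix l n R) : Matrix l (Fin p × n) R :=
  of fun k b => X (b.1 + 1) k b.2

theorem blockRow_mul_blockToeplitz (p : ℕ) (X : ℕ → Matrix l n R) (Γ : ℤ → Matrix n n R)
    (k : l) (b : Fin p × n) :
    (blockRow p X * blockToeplitz p Γ) k b
      = (∑ r ∈ Icc 1 p, X r * Γ ((b.1 + 1 : ℕ) - (r : ℤ))) k b.2 := by
  simp only [mul_apply, blockRow, blockToeplitz, of_apply, Matrix.sum_apply, Fintype.sum_prod_type,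
    sum_Icc_one_eq_sum_fin]
  push_cast
  simp only [add_sub_add_right_eq_sub]

theorem eq_of_sum_mul_blockToeplitz_eq [DecidableEq n] {p : ℕ} {Γ : ℤ → Matrix n n R}
    (hT : IsUnit (blockToeplitz p Γ)) {X Y : ℕ → Matrix l n R}
    (h : ∀ s ∈ Icc 1 p, ∑ r ∈ Icc 1 p, X r * Γ (s - r) = ∑ r ∈ Icc 1 p, Y r * Γ (s - r)) :
    ∀ r ∈ Icc 1 p, X r = Y r := by
  have hmul : blockRow p X * blockToeplitz p Γ = blockRow p Y * blockToeplitz p Γ := by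
    ext k b
    rw [blockRow_mul_blockToeplitz, blockRow_mul_blockToeplitz,
      h _ (mem_Icc.mpr ⟨le_add_self, b.1.isLt⟩)]
  have hrow : blockRow p X = blockRow p Y := by
    have hdet := (isUnit_iff_isUnit_det _).mp hT
    rw [← mul_nonsing_inv_cancel_right _ (blockRow p X) hdet, hmul,
      mul_nonsing_inv_cancel_right _ _ hdet]
  intro r hr
  obtain ⟨hr1, hrp⟩ := mem_Icc.mp hr
  obtain ⟨a, rfl⟩ : ∃ a, r = a + 1 := ⟨r - 1, by omega⟩
  ext k j
  simpa [blockRow] using congrFun₂ hrow k (⟨a, by omega⟩, j)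

end BlockToeplitz

theorem BackwardYW.sum_mul_eq {m p : ℕ} {Γ : ℤ → Matrix (Fin m) (Fin m) ℝ}
    {Φt : ℕ → Matrix (Fin m) (Fin m) ℝ} (h : BackwardYW m p Γ Φt) :
    ∀ s ∈ Icc 1 p, ∑ r ∈ Icc 1 p, Φt (p + 1 - r) * Γ (s - r) = -Γ (s - p - 1) := by
  intro s hs
  ext i j
  simpa [Matrix.sum_apply, mul_apply] using h s hs i j

theorem OrthogonalityEqs.sum_mul_eq {m p : ℕ} {Γ : ℤ → Matrix (Fin m) (Fin m) ℝ}
    {J : Matrix (Fin m) (Fin m) ℝ} (hJ : IsUnit J)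
    {D : ℕ → Fin m → Fin m → Matrix (Fin m) (Fin m) ℝ} (h : OrthogonalityEqs m p Γ J D) :
    ∀ s ∈ Icc 1 p, ∀ u v, ∑ r ∈ Icc 1 p, D r u v * Γ (s - r) = single u v 1 * -Γ (s - p - 1) := by
  intro s hs u v
  apply ((isUnit_transpose J).mpr hJ).mul_left_cancel
  ext i j
  simp only [mul_apply, Matrix.sum_apply, transpose_apply, mul_sum]
  rw [sum_comm]
  refine ((sum_congr rfl fun r _ => sum_congr rfl fun k _ => sum_congr rfl fun ℓ _ => ?_).trans
    (h s hs i j u v)).trans ?_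
  · ring
  · simp [single_apply, ite_and]

theorem single_mul_eq_of_orthogonalityEqs {m p : ℕ} {Γ : ℤ → Matrix (Fin m) (Fin m) ℝ}
    (hT : IsUnit (blockToeplitz p Γ)) {J : Matrix (Fin m) (Fin m) ℝ} (hJ : IsUnit J)
    {Φt : ℕ → Matrix (Fin m) (Fin m) ℝ} (hYW : BackwardYW m p Γ Φt)
    {D : ℕ → Fin m → Fin m → Matrix (Fin m) (Fin m) ℝ} (hD : OrthogonalityEqs m p Γ J D)
    (u v : Fin m) : ∀ r ∈ Icc 1 p, D r u v = single u v 1 * Φt (p + 1 - r) := by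
  refine eq_of_sum_mul_blockToeplitz_eq hT fun s hs => ?_
  rw [hD.sum_mul_eq hJ s hs u v, ← hYW.sum_mul_eq s hs, mul_sum]
  simp only [Matrix.mul_assoc]

theorem stmt16_general {m p : ℕ}
    (Γ : ℤ → Matrix (Fin m) (Fin m) ℝ)
    (hT : IsUnit (Matrix.of fun a b : Fin p × Fin m =>
      Γ ((b.1 : ℤ) - (a.1 : ℤ)) a.2 b.2))
    (J : Matrix (Fin m) (Fin m) ℝ) (hJ : IsUnit J)
    (Φt : ℕ → Matrix (Fin m) (Fin m) ℝ)
    (hYW : BackwardYW m p Γ Φt)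
    (Φ : ℕ → Matrix (Fin m) (Fin m) ℝ)
    (L : ℕ → Matrix (Fin m) (Fin m) ℝ →ₗ[ℝ] Matrix (Fin m) (Fin m) ℝ)
    (Φnext : ℕ → Matrix (Fin m) (Fin m) ℝ → Matrix (Fin m) (Fin m) ℝ)
    (hΦnext : ∀ r A, Φnext r A = Φ r + L r A)
    (hD : OrthogonalityEqs m p Γ J
      (fun r u v => L r (Matrix.single u v (1 : ℝ)))) :
    ∀ A : Matrix (Fin m) (Fin m) ℝ, ∀ r ∈ Finset.Icc 1 p,
      L r A = A * Φt (p + 1 - r) ∧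
      Φnext r A = Φ r + A * Φt (p + 1 - r) := by
  intro A r hr
  have hL : L r = LinearMap.mulRight ℝ (Φt (p + 1 - r)) :=
    ext_linearMap ℝ fun u v => LinearMap.ext_ring <| by
      simpa using single_mul_eq_of_orthogonalityEqs hT hJ hYW hD u v r hr
  have hLA : L r A = A * Φt (p + 1 - r) := LinearMap.congr_fun hL A
  exact ⟨hLA, by rw [hΦnext, hLA]⟩

/-- Uniqueness of Whittle's forward recursion among linear transformations: if the
block Toeplitz matrix `T` and `J` are invertible, `Φ̃_{p,1}, …, Φ̃_{p,p}` satisfy the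
backward Yule–Walker equations, and the linear maps `L_r` are such that the derivative
matrices `D_r^{(u,v)} = L_r(E_{u,v})` satisfy the orthogonality equations, then
`L_r(A) = A Φ̃_{p,p+1−r}` for every `A`, i.e. the transformation
`Φ_{p+1,r}(A) = Φ_{p,r} + L_r(A)` is exactly Whittle's forward recursion
`Φ_{p+1,r}(A) = Φ_{p,r} + A Φ̃_{p,p+1−r}`. -/
theorem stmt16 {m p : ℕ} (hm : 1 ≤ m) (hp : 1 ≤ p)
    (Γ : ℤ → Matrix (Fin m) (Fin m) ℝ)
    (hT : IsUnit (Matrix.of fun a b : Fin p × Fin m =>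
      Γ ((b.1 : ℤ) - (a.1 : ℤ)) a.2 b.2))
    (J : Matrix (Fin m) (Fin m) ℝ) (hJ : IsUnit J)
    (Φt : ℕ → Matrix (Fin m) (Fin m) ℝ)
    (hYW : BackwardYW m p Γ Φt)
    (Φ : ℕ → Matrix (Fin m) (Fin m) ℝ)
    (L : ℕ → Matrix (Fin m) (Fin m) ℝ →ₗ[ℝ] Matrix (Fin m) (Fin m) ℝ)
    (Φnext : ℕ → Matrix (Fin m) (Fin m) ℝ → Matrix (Fin m) (Fin m) ℝ)
    (hΦnext : ∀ r A, Φnext r A = Φ r + L r A)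
    (hD : OrthogonalityEqs m p Γ J
      (fun r u v => L r (Matrix.single u v (1 : ℝ)))) :
    ∀ A : Matrix (Fin m) (Fin m) ℝ, ∀ r ∈ Finset.Icc 1 p,
      L r A = A * Φt (p + 1 - r) ∧
      Φnext r A = Φ r + A * Φt (p + 1 - r) :=
  stmt16_general Γ hT J hJ Φt hYW Φ L Φnext hΦnext hD
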